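/- Assume condition (★) holds for affine functions l₀, …, l_d on ℝ^d with normal vectors n₀, …, n_d and points p₀, …, p_d, and let S := {x ∈ ℝ^d : l_k(x) ≥ 0 for all k = 0, …, d}. Then for every x in the interior of S and every j ∈ {0, …, d}: ⟨n_j, x − p_j⟩ < 0, and ⟨n_k, x − p_j⟩ > 0 for every k ≠ j. -/

import Mathlib

open scoped RealInnerProductSpace

/-!
Each `l k` vanishes at every vertex except `p k`, so the affine function `l k`
reads off the `k`-th barycentric coordinate with respect to the `p`'s, scaled by
`l k (p k)`. This makes the `p`'s affinely independent, hence (there are `d + 1` of them) an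
affine basis of `ℝ^d`, and gives `∑ k, l k x / l k (p k) = 1` for every `x`. On the interior
of `S` all `l k` are strictly positive, so each summand is `< 1`, i.e. `l j x < l j (p j)`;
the two inequalities are `l j x - l j (p j) < 0` and `l k x - l k (p j) = l k x > 0`.
-/

open Finset

section Barycentric

variable {k V P ι : Type*} [Field k] [AddCommGroup V] [Module k V] [AddTorsor V P] [Fintype ι]
  {f : ι → P →ᵃ[k] k} {p : ι → P}

theorem apply_affineCombination_of_apply_eq_zero (hzero : ∀ i j, i ≠ j → f i (p j) = 0)
    {w : ι → k} (hw : ∑ i, w i = 1) (i : ι) :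
    f i (univ.affineCombination k p w) = w i * f i (p i) := by
  rw [Finset.map_affineCombination _ _ _ hw, affineCombination_eq_linear_combination _ _ _ hw,
    sum_eq_single i (fun j _ hji => by simp [hzero i j hji.symm]) (by simp)]
  rfl

theorem affineIndependent_of_apply_eq_zero (hzero : ∀ i j, i ≠ j → f i (p j) = 0)
    (hne : ∀ i, f i (p i) ≠ 0) : AffineIndependent k p := by
  rw [affineIndependent_iff_eq_of_fintype_affineCombination_eq]
  intro w₁ w₂ hw₁ hw₂ heq
  funext i
  have hi := congrArg (f i) heq
  rw [apply_affineCombination_of_apply_eq_zero hzero hw₁,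
    apply_affineCombination_of_apply_eq_zero hzero hw₂] at hi
  exact mul_right_cancel₀ (hne i) hi

theorem sum_inv_mul_apply_eq_one (hspan : affineSpan k (Set.range p) = ⊤)
    (hzero : ∀ i j, i ≠ j → f i (p j) = 0) (hne : ∀ i, f i (p i) ≠ 0) (x : P) :
    ∑ i, (f i (p i))⁻¹ * f i x = 1 := by
  obtain ⟨w, hw, rfl⟩ :=
    eq_affineCombination_of_mem_affineSpan_of_fintype (hspan ▸ AffineSubspace.mem_top k V x)
  simp_rw [apply_affineCombination_of_apply_eq_zero hzero hw]
  rw [← hw]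
  exact sum_congr rfl fun i _ => by rw [mul_comm (w i), inv_mul_cancel_left₀ (hne i)]

theorem apply_lt_apply_vertex [LinearOrder k] [IsStrictOrderedRing k] [Nontrivial ι]
    (hspan : affineSpan k (Set.range p) = ⊤) (hzero : ∀ i j, i ≠ j → f i (p j) = 0)
    (hpos : ∀ i, 0 < f i (p i)) {x : P} (hx : ∀ i, 0 < f i x) (j : ι) :
    f j x < f j (p j) := by
  obtain ⟨i, hij⟩ := exists_ne j
  have hterm : ∀ i, 0 < (f i (p i))⁻¹ * f i x := fun i => mul_pos (inv_pos.2 (hpos i)) (hx i)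
  have hlt : (f j (p j))⁻¹ * f j x < 1 := by
    rw [← sum_inv_mul_apply_eq_one hspan hzero (fun i => (hpos i).ne') x]
    exact single_lt_sum hij (mem_univ _) (mem_univ _) (hterm i) fun i _ _ => (hterm i).le
  rwa [inv_mul_lt_iff₀ (hpos j), mul_one] at hlt

end Barycentric

theorem lt_of_mem_interior_setOf_le {E : Type*} [AddCommGroup E] [TopologicalSpace E]
    [ContinuousAdd E] [Module ℝ E] [ContinuousSMul ℝ E] {φ : StrongDual ℝ E} (hφ : φ ≠ 0)
    {a : ℝ} {x : E} (hx : x ∈ interior {y | a ≤ φ y}) : a < φ x := by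
  have himage : φ '' interior {y | a ≤ φ y} ⊆ interior (Set.Ici a) :=
    interior_maximal (Set.image_subset_iff.2 fun _ hy => interior_subset hy)
      (φ.isOpenMap_of_ne_zero hφ _ isOpen_interior)
  rw [interior_Ici] at himage
  exact himage ⟨x, hx, rfl⟩

theorem stmt_8_general (d : ℕ) (hd : 1 ≤ d)
    (n : Fin (d + 1) → EuclideanSpace ℝ (Fin d)) (hn : ∀ k, n k ≠ 0)
    (c : Fin (d + 1) → ℝ)
    (l : Fin (d + 1) → EuclideanSpace ℝ (Fin d) → ℝ)
    (hl : ∀ k x, l k x = ⟪n k, x⟫ + c k)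
    (p : Fin (d + 1) → EuclideanSpace ℝ (Fin d))
    (hp : ∀ j, {x : EuclideanSpace ℝ (Fin d) | ∀ k, k ≠ j → l k x = 0} = {p j})
    (hpos : ∀ j, 0 < l j (p j)) :
    ∀ x ∈ interior {y : EuclideanSpace ℝ (Fin d) | ∀ k, 0 ≤ l k y},
      ∀ j, ⟪n j, x - p j⟫ < 0 ∧ ∀ k, k ≠ j → 0 < ⟪n k, x - p j⟫ := by
  intro x hx j
  let L : Fin (d + 1) → EuclideanSpace ℝ (Fin d) →ᵃ[ℝ] ℝ := fun k =>
    (innerₛₗ ℝ (n k)).toAffineMap + AffineMap.const ℝ _ (c k)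
  have hL : ∀ k y, L k y = l k y := fun k y => by simp [L, hl]
  have hzero : ∀ k j, k ≠ j → L k (p j) = 0 := fun k j hkj => by
    rw [hL]
    exact (hp j ▸ Set.mem_singleton (p j) : p j ∈ {x | ∀ k, k ≠ j → l k x = 0}) k hkj
  have hspan : affineSpan ℝ (Set.range p) = ⊤ :=
    (affineIndependent_of_apply_eq_zero hzero fun k => (hL k _).trans_ne (hpos k).ne')
      |>.affineSpan_eq_top_iff_card_eq_finrank_add_one.2 (by simp)
  have hxpos : ∀ k, 0 < l k x := fun k => by
    have hk : x ∈ interior {y | -c k ≤ innerSL ℝ (n k) y} :=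
      interior_mono (fun y hy => by simpa [hl, neg_le_iff_add_nonneg] using hy k) hx
    have hφ : innerSL ℝ (n k) ≠ 0 := DFunLike.ne_iff.2 ⟨n k, by simpa using hn k⟩
    simpa [hl, neg_lt_iff_pos_add] using lt_of_mem_interior_setOf_le hφ hk
  have hdiff : ∀ k, ⟪n k, x - p j⟫ = l k x - l k (p j) := fun k => by
    rw [inner_sub_right, hl, hl]; ring
  have : Nontrivial (Fin (d + 1)) := Fin.nontrivial_iff_two_le.2 (by omega)
  have hlt := apply_lt_apply_vertex hspan hzero (fun k => (hL k _).trans_gt (hpos k))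
    (fun k => (hL k x).trans_gt (hxpos k)) j
  rw [hL, hL] at hlt
  refine ⟨by linarith [hdiff j], fun k hkj => ?_⟩
  rw [hdiff, ← hL k (p j), hzero k j hkj, sub_zero]
  exact hxpos k

/-- Lemma 3.6: under condition (★), for interior points `x` of `S` and every `j`,
`⟨n_j, x − p_j⟩ < 0` and `⟨n_k, x − p_j⟩ > 0` for `k ≠ j`. -/
theorem stmt_8 (d : ℕ) (hd : 1 ≤ d)
    (n : Fin (d + 1) → EuclideanSpace ℝ (Fin d)) (hn : ∀ k, n k ≠ 0)
    (c : Fin (d + 1) → ℝ)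
    (l : Fin (d + 1) → EuclideanSpace ℝ (Fin d) → ℝ)
    (hl : ∀ k x, l k x = ⟪n k, x⟫ + c k)
    (p : Fin (d + 1) → EuclideanSpace ℝ (Fin d))
    (hdist : ∀ j k, j ≠ k → p j ≠ p k)
    (hp : ∀ j, {x : EuclideanSpace ℝ (Fin d) | ∀ k, k ≠ j → l k x = 0} = {p j})
    (hpos : ∀ j, 0 < l j (p j)) :
    ∀ x ∈ interior {y : EuclideanSpace ℝ (Fin d) | ∀ k, 0 ≤ l k y},
      ∀ j, ⟪n j, x - p j⟫ < 0 ∧ ∀ k, k ≠ j → 0 < ⟪n k, x - p j⟫ :=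
  stmt_8_general d hd n hn c l hl p hp hpos
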